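/- arXiv:1406.6587 — 9 statements merged into one kernel-verified Lean document; each statement's English description precedes it below -/
import Mathlib

section
/- Let M ∈ ℝ^{n×r} with ker(M) ≠ {0}, and let C ∈ ℝ^{r×p} be a matrix with im(C) = ker(M) and ker(C) = {0}. Then for γ ∈ ℝ^r_>, the set Z_{M,γ} = {x ∈ ℝ^n_> : x^M = γ} is nonempty if and only if γ^C = (1,…,1) ∈ ℝ^p. -/
open Matrix


/-- For `x ∈ ℝ^ι` and `M ∈ ℝ^{ι×κ}`, the generalized monomial vector `x^M ∈ ℝ^κ`
with `(x^M)_j = ∏ i, x i ^ M i j` (real exponentiation). -/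
noncomputable def matPow {ι κ : Type*} [Fintype ι] (x : ι → ℝ) (M : Matrix ι κ ℝ) : κ → ℝ :=
  fun j => ∏ i, x i ^ M i j

lemma matPow_eq_exp {ι κ : Type*} [Fintype ι] (x : ι → ℝ) (hx : ∀ i, 0 < x i)
    (M : Matrix ι κ ℝ) (j : κ) :
    matPow x M j = Real.exp (Matrix.vecMul (fun i => Real.log (x i)) M j) := by
  simp only [matPow, Matrix.vecMul, dotProduct]
  rw [Real.exp_sum]
  exact Finset.prod_congr rfl fun i _ => (Real.rpow_def_of_pos (hx i) _)

/-- if `ker M ≠ {0}` and `C` has `im C = ker M`, `ker C = {0}`, then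
`Z_{M,γ} ≠ ∅` iff `γ^C = (1,…,1)`. -/
theorem stmt2 {n r p : ℕ} (M : Matrix (Fin n) (Fin r) ℝ)
    (hM : LinearMap.ker M.mulVecLin ≠ ⊥)
    (C : Matrix (Fin r) (Fin p) ℝ)
    (hC1 : LinearMap.range C.mulVecLin = LinearMap.ker M.mulVecLin)
    (hC2 : LinearMap.ker C.mulVecLin = ⊥)
    (γ : Fin r → ℝ) (hγ : ∀ j, 0 < γ j) :
    (∃ x : Fin n → ℝ, (∀ i, 0 < x i) ∧ matPow x M = γ) ↔
    matPow γ C = fun _ => (1 : ℝ) := by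
  set z : Fin r → ℝ := fun j => Real.log (γ j) with hz
  -- M * C = 0 since columns of C are in ker M
  have hMC : M * C = 0 := by
    ext i j
    have hcol : (fun k => C k j) ∈ LinearMap.ker M.mulVecLin := by
      rw [← hC1]
      refine ⟨Pi.single j 1, ?_⟩
      simp [Matrix.mulVecLin_apply, Matrix.mulVec_single]
      rfl
    have h0 := congrFun (LinearMap.mem_ker.mp hcol) i
    simpa [Matrix.mul_apply, Matrix.mulVec, dotProduct] using h0
  -- rowspace of M ≤ ker of Cᵀ
  have hle : LinearMap.range (Mᵀ.mulVecLin) ≤ LinearMap.ker (Cᵀ.mulVecLin) := by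
    rintro _ ⟨v, rfl⟩
    simp only [LinearMap.mem_ker, Matrix.mulVecLin_apply]
    rw [Matrix.mulVec_mulVec, ← Matrix.transpose_mul, hMC]
    simp
  -- dimension count gives equality
  have h1 := LinearMap.finrank_range_add_finrank_ker M.mulVecLin
  have h2 := LinearMap.finrank_range_add_finrank_ker Cᵀ.mulVecLin
  have hrM : Mᵀ.rank = M.rank := Matrix.rank_transpose M
  have hrC : Cᵀ.rank = C.rank := Matrix.rank_transpose C
  have hfin : Module.finrank ℝ (Fin r → ℝ) = r := by simp
  have hkerM : Module.finrank ℝ (LinearMap.ker M.mulVecLin) = C.rank := by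
    rw [← hC1]; rfl
  have hkey : LinearMap.range (Mᵀ.mulVecLin) = LinearMap.ker (Cᵀ.mulVecLin) := by
    refine Submodule.eq_of_le_of_finrank_eq hle ?_
    have e1 : Module.finrank ℝ (LinearMap.range Mᵀ.mulVecLin) = Mᵀ.rank := rfl
    have e2 : Module.finrank ℝ (LinearMap.range Cᵀ.mulVecLin) = Cᵀ.rank := rfl
    rw [hfin] at h1 h2
    rw [hkerM] at h1
    rw [e2, hrC] at h2
    rw [e1, hrM]
    unfold Matrix.rank at *
    omega
  constructor
  · rintro ⟨x, hx, hxM⟩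
    have hmem : z ∈ LinearMap.range (Mᵀ.mulVecLin) := by
      refine ⟨fun i => Real.log (x i), ?_⟩
      funext j
      have h0 := congrFun hxM j
      rw [matPow_eq_exp x hx M j] at h0
      have h1 : Matrix.vecMul (fun i => Real.log (x i)) M j = z j := by
        simp only [hz]
        rw [← h0, Real.log_exp]
      simpa [Matrix.mulVecLin_apply, Matrix.mulVec_transpose] using h1
    have hker := hle hmem
    simp only [LinearMap.mem_ker, Matrix.mulVecLin_apply, Matrix.mulVec_transpose] at hker
    funext j
    rw [matPow_eq_exp γ hγ C j]
    have : Matrix.vecMul z C j = 0 := congrFun hker j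
    rw [this, Real.exp_zero]
  · intro h
    have hker : z ∈ LinearMap.ker (Cᵀ.mulVecLin) := by
      simp only [LinearMap.mem_ker, Matrix.mulVecLin_apply, Matrix.mulVec_transpose]
      funext j
      have h0 := congrFun h j
      rw [matPow_eq_exp γ hγ C j] at h0
      have h2 := congrArg Real.log h0
      rwa [Real.log_exp, Real.log_one] at h2
    rw [← hkey] at hker
    obtain ⟨y, hy⟩ := hker
    refine ⟨fun i => Real.exp (y i), fun i => Real.exp_pos _, ?_⟩
    funext j
    rw [matPow_eq_exp _ (fun i => Real.exp_pos _) M j]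
    simp only [Real.log_exp]
    have h1 : Matrix.vecMul y M j = z j := by
      rw [← Matrix.mulVec_transpose]
      exact congrFun hy j
    rw [h1]
    exact Real.exp_log (hγ j)
end

section
/- Let M ∈ ℝ^{n×r} and γ ∈ ℝ^r_> be such that ln γ ∈ im(M^T). Let H ∈ ℝ^{n×r} be a generalized inverse of M^T, i.e. M^T H M^T = M^T. Then x* := γ^{H^T} satisfies (x*)^M = γ, i.e. x* ∈ Z_{M,γ}. -/
/-- if `ln γ ∈ im Mᵀ` and `H` is a generalized inverse of `Mᵀ`,
then `x* := γ^{Hᵀ}` is a positive solution of `x^M = γ`. -/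
theorem stmt3 {n r : ℕ} (M : Matrix (Fin n) (Fin r) ℝ)
    (γ : Fin r → ℝ) (hγ : ∀ j, 0 < γ j)
    (hlog : (fun j => Real.log (γ j)) ∈ LinearMap.range M.transpose.mulVecLin)
    (H : Matrix (Fin n) (Fin r) ℝ)
    (hH : M.transpose * H * M.transpose = M.transpose) :
    (∀ i, 0 < matPow γ H.transpose i) ∧ matPow (matPow γ H.transpose) M = γ := by
  set L : Fin r → ℝ := fun j => Real.log (γ j) with hL
  have hx : ∀ i, matPow γ H.transpose i = Real.exp (∑ j, H i j * L j) := by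
    intro i
    rw [matPow, Real.exp_sum]
    refine Finset.prod_congr rfl fun j _ => ?_
    rw [Matrix.transpose_apply, Real.rpow_def_of_pos (hγ j), mul_comm]
  have hpos : ∀ i, 0 < matPow γ H.transpose i := by
    intro i; rw [hx i]; exact Real.exp_pos _
  refine ⟨hpos, ?_⟩
  -- key linear algebra fact
  obtain ⟨v, hv⟩ := hlog
  have hkey : M.transpose.mulVec (H.mulVec L) = L := by
    have : L = M.transpose.mulVec v := by
      rw [← hv]; rfl
    rw [this, Matrix.mulVec_mulVec, Matrix.mulVec_mulVec, hH]
  funext k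
  have hk := congrFun hkey k
  simp only [Matrix.mulVec, dotProduct, Matrix.transpose_apply] at hk
  have hexp : matPow (matPow γ H.transpose) M k = Real.exp (∑ i, M i k * ∑ j, H i j * L j) := by
    rw [matPow, Real.exp_sum]
    refine Finset.prod_congr rfl fun i _ => ?_
    rw [hx i, Real.rpow_def_of_pos (Real.exp_pos _), Real.log_exp, mul_comm]
  rw [hexp]
  -- hk : ∑ i, M i k * (∑ j, H i j * L j) = L k  (possibly with inner sum form)
  rw [show (∑ i, M i k * ∑ j, H i j * L j) = L k from hk, hL, Real.exp_log (hγ k)]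
end

section
/- Let M ∈ ℝ^{n×r}, γ ∈ ℝ^r_>, and suppose x* ∈ Z_{M,γ}. Then Z_{M,γ} = { x* ∘ e^v : v ∈ im(M)^⊥ }, where e^v is the componentwise exponential and ∘ the componentwise product. -/
/-- The orthogonal complement of a subspace of `ℝ^n` (standard inner product). -/
def orthComp {n : ℕ} (S : Submodule ℝ (Fin n → ℝ)) : Submodule ℝ (Fin n → ℝ) where
  carrier := {v | ∀ u ∈ S, ∑ i, v i * u i = 0}
  zero_mem' := by intro u hu; simp
  add_mem' := by
    intro a b ha hb u hu
    have h1 := ha u hu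
    have h2 := hb u hu
    simp only [Pi.add_apply, add_mul, Finset.sum_add_distrib, h1, h2, add_zero]
  smul_mem' := by
    intro c a ha u hu
    have h1 := ha u hu
    simp only [Pi.smul_apply, smul_eq_mul, mul_assoc, ← Finset.mul_sum, h1, mul_zero]

lemma orth_iff {n r : ℕ} (M : Matrix (Fin n) (Fin r) ℝ) (v : Fin n → ℝ) :
    v ∈ orthComp (LinearMap.range M.mulVecLin) ↔ ∀ j, ∑ i, v i * M i j = 0 := by
  constructor
  · intro hv j
    have := hv (M.mulVec (Pi.single j 1)) ⟨Pi.single j 1, rfl⟩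
    simpa [Matrix.mulVec, dotProduct, Pi.single_apply, Finset.mul_sum,
      mul_ite, mul_comm] using this
  · rintro h u ⟨y, rfl⟩
    simp only [Matrix.mulVecLin_apply, Matrix.mulVec, dotProduct, Finset.mul_sum]
    rw [Finset.sum_comm]
    refine Finset.sum_eq_zero fun j _ => ?_
    simp only [← mul_assoc, ← Finset.sum_mul, h, zero_mul]

/-- given a positive solution `x*` of `x^M = γ`,
`Z_{M,γ} = { x* ∘ e^v : v ∈ im(M)^⊥ }`. -/
theorem stmt4 {n r : ℕ} (M : Matrix (Fin n) (Fin r) ℝ)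
    (γ : Fin r → ℝ) (hγ : ∀ j, 0 < γ j)
    (xs : Fin n → ℝ) (hxs : ∀ i, 0 < xs i) (hsol : matPow xs M = γ) :
    {x : Fin n → ℝ | (∀ i, 0 < x i) ∧ matPow x M = γ} =
      {x : Fin n → ℝ | ∃ v ∈ orthComp (LinearMap.range M.mulVecLin),
        x = fun i => xs i * Real.exp (v i)} := by
  have key : ∀ (v : Fin n → ℝ) (j : Fin r),
      matPow (fun i => xs i * Real.exp (v i)) M j = γ j * Real.exp (∑ i, v i * M i j) := by
    intro v j
    rw [← hsol]
    simp only [matPow]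
    calc ∏ i, (xs i * Real.exp (v i)) ^ M i j
        = ∏ i, xs i ^ M i j * Real.exp (v i * M i j) := by
          refine Finset.prod_congr rfl fun i _ => ?_
          rw [Real.mul_rpow (hxs i).le (Real.exp_pos _).le,
            Real.rpow_def_of_pos (Real.exp_pos _), Real.log_exp]
      _ = (∏ i, xs i ^ M i j) * Real.exp (∑ i, v i * M i j) := by
          rw [Finset.prod_mul_distrib, Real.exp_sum]
  ext x
  simp only [Set.mem_setOf_eq]
  constructor
  · rintro ⟨hx, hm⟩
    refine ⟨fun i => Real.log (x i / xs i), ?_, ?_⟩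
    · rw [orth_iff]
      intro j
      have h1 : ∀ i, x i = xs i * Real.exp (Real.log (x i / xs i)) := by
        intro i
        rw [Real.exp_log (div_pos (hx i) (hxs i)),
          mul_div_cancel₀ _ (hxs i).ne']
      have h2 : matPow (fun i => xs i * Real.exp (Real.log (x i / xs i))) M j = γ j := by
        rw [show (fun i => xs i * Real.exp (Real.log (x i / xs i))) = x from (funext fun i => (h1 i).symm), hm]
      rw [key] at h2
      have h3 : Real.exp (∑ i, Real.log (x i / xs i) * M i j) = 1 :=
        mul_left_cancel₀ (hγ j).ne' (by rw [h2, mul_one])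
      have h4 := congrArg Real.log h3
      rwa [Real.log_exp, Real.log_one] at h4
    · funext i
      rw [Real.exp_log (div_pos (hx i) (hxs i)),
        mul_div_cancel₀ _ (hxs i).ne']
  · rintro ⟨v, hv, rfl⟩
    rw [orth_iff] at hv
    refine ⟨fun i => mul_pos (hxs i) (Real.exp_pos _), ?_⟩
    funext j
    rw [key, hv, Real.exp_zero, mul_one]
end

section
/- Let A ∈ ℝ^{m×m} and suppose ker(A) is spanned by l linearly independent vectors χ^1,…,χ^l ∈ ℝ^m with χ^λ_μ = K_μ > 0 for μ ∈ L_λ and χ^λ_μ = 0 for μ ∉ L_λ, where L_1,…,L_l partition {1,…,m} and the elements of L_λ are enumerated as i^λ_1,…,i^λ_{m_λ}. Let ℰ = {(i^λ_μ, i^λ_{μ+1}) : λ = 1,…,l; μ = 1,…,m_λ−1}. Then the m−l vectors K_i e^j − K_j e^i, (i,j) ∈ ℰ, form a basis of ker(A)^⊥, and consequently, for any ψ ∈ ℝ^m, A ψ = 0 if and only if K_i ψ_j − K_j ψ_i = 0 for all (i,j) ∈ ℰ. -/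
/-- The source vertex `i^λ_μ` of the consecutive pair `(i^λ_μ, i^λ_{μ+1})` in `ℰ`,
for an enumeration `φ` of `{1,…,m}` by classes `L_λ`. -/
def src {m l : ℕ} {mlam : Fin l → ℕ} (φ : ((lam : Fin l) × Fin (mlam lam)) ≃ Fin m)
    (s : (lam : Fin l) × Fin (mlam lam - 1)) : Fin m :=
  φ ⟨s.1, ⟨s.2.1, by have := s.2.2; omega⟩⟩

/-- The target vertex `i^λ_{μ+1}` of the consecutive pair `(i^λ_μ, i^λ_{μ+1})` in `ℰ`. -/
def tgt {m l : ℕ} {mlam : Fin l → ℕ} (φ : ((lam : Fin l) × Fin (mlam lam)) ≃ Fin m)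
    (s : (lam : Fin l) × Fin (mlam lam - 1)) : Fin m :=
  φ ⟨s.1, ⟨s.2.1 + 1, by have := s.2.2; omega⟩⟩

/-- The vector `χ^λ ∈ ℝ^m` with `χ^λ_μ = K_μ` for `μ ∈ L_λ` and `χ^λ_μ = 0` otherwise. -/
def chi {m l : ℕ} {mlam : Fin l → ℕ} (φ : ((lam : Fin l) × Fin (mlam lam)) ≃ Fin m)
    (K : Fin m → ℝ) : Fin l → Fin m → ℝ :=
  fun lam μ => if (φ.symm μ).1 = lam then K μ else 0

noncomputable def eE (n : ℕ) : EuclideanSpace ℝ (Fin n) ≃ₗ[ℝ] (Fin n → ℝ) :=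
  WithLp.linearEquiv 2 ℝ (Fin n → ℝ)

lemma orthComp_eq {n : ℕ} (S : Submodule ℝ (Fin n → ℝ)) :
    orthComp S = ((S.comap (eE n).toLinearMap)ᗮ).map (eE n).toLinearMap := by
  ext v
  rw [Submodule.mem_map_equiv]
  constructor
  · intro hv u hu
    have := hv (eE n u) hu
    simp only [PiLp.inner_apply, RCLike.inner_apply, conj_trivial]
    simpa [eE, mul_comm] using this
  · intro hv u hu
    have := hv ((eE n).symm u) (by simpa [eE] using hu)
    simp only [PiLp.inner_apply, RCLike.inner_apply, conj_trivial] at this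
    simpa [eE, mul_comm] using this

lemma orthComp_orthComp {n : ℕ} (S : Submodule ℝ (Fin n → ℝ)) :
    orthComp (orthComp S) = S := by
  have cm : ∀ T : Submodule ℝ (EuclideanSpace ℝ (Fin n)),
      Submodule.comap (eE n).toLinearMap (Submodule.map (eE n).toLinearMap T) = T :=
    fun T => Submodule.comap_map_eq_of_injective (eE n).injective T
  have mc : ∀ T : Submodule ℝ (Fin n → ℝ),
      Submodule.map (eE n).toLinearMap (Submodule.comap (eE n).toLinearMap T) = T :=
    fun T => Submodule.map_comap_eq_of_surjective (eE n).surjective T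
  rw [orthComp_eq, orthComp_eq S, cm, Submodule.orthogonal_orthogonal, mc]

lemma finrank_orthComp {n : ℕ} (S : Submodule ℝ (Fin n → ℝ)) :
    Module.finrank ℝ (orthComp S) + Module.finrank ℝ S = n := by
  rw [orthComp_eq, LinearEquiv.finrank_map_eq,
    Submodule.comap_equiv_eq_map_symm]
  rw [add_comm, ← LinearEquiv.finrank_map_eq (eE n).symm S]
  have := Submodule.finrank_add_finrank_orthogonal (𝕜 := ℝ) (S.map (eE n).symm.toLinearMap)
  rw [this]
  exact finrank_euclideanSpace_fin

lemma mem_orthComp_span_range {n : ℕ} {ι : Type*} (f : ι → Fin n → ℝ) (v : Fin n → ℝ) :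
    v ∈ orthComp (Submodule.span ℝ (Set.range f)) ↔ ∀ j, ∑ i, v i * f j i = 0 := by
  constructor
  · intro hv j; exact hv _ (Submodule.subset_span ⟨j, rfl⟩)
  · intro h u hu
    induction hu using Submodule.span_induction with
    | mem u hu => obtain ⟨j, rfl⟩ := hu; exact h j
    | zero => simp
    | add u w _ _ hu hw =>
        simp only [Pi.add_apply, mul_add, Finset.sum_add_distrib, hu, hw, add_zero]
    | smul c u _ hu =>
        have : ∀ i, v i * (c • u) i = c * (v i * u i) := fun i => by
          simp [Pi.smul_apply]; ring
        simp only [this, ← Finset.mul_sum, hu, mul_zero]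

lemma sum_mul_vpair {n : ℕ} (w : Fin n → ℝ) (a b : ℝ) (j j' : Fin n) :
    ∑ i, w i * (a • (Pi.single j 1 : Fin n → ℝ) - b • (Pi.single j' 1 : Fin n → ℝ)) i = a * w j - b * w j' := by
  simp only [Pi.sub_apply, Pi.smul_apply, Pi.single_apply, smul_eq_mul, mul_sub,
    Finset.sum_sub_distrib, mul_ite, mul_one, mul_zero]
  rw [Finset.sum_ite_eq', Finset.sum_ite_eq']
  simp [mul_comm]

lemma sum_vpair_mul {n : ℕ} (w : Fin n → ℝ) (a b : ℝ) (j j' : Fin n) :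
    ∑ i, (a • (Pi.single j 1 : Fin n → ℝ) - b • (Pi.single j' 1 : Fin n → ℝ)) i * w i = a * w j - b * w j' := by
  rw [← sum_mul_vpair w a b j j']
  exact Finset.sum_congr rfl fun i _ => mul_comm _ _

/-- if `ker A` is spanned by the `l` independent vectors `χ^λ` (supported
on the classes `L_λ`, with entries `K_μ > 0`), then the `m - l` vectors
`K_i e^j - K_j e^i`, `(i,j) ∈ ℰ`, form a basis of `ker(A)^⊥`; consequently
`A ψ = 0 ↔ K_i ψ_j - K_j ψ_i = 0` for all `(i,j) ∈ ℰ`. -/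
theorem stmt8 {m l : ℕ} {A : Matrix (Fin m) (Fin m) ℝ}
    {mlam : Fin l → ℕ} (hml : ∀ lam, 0 < mlam lam)
    (φ : ((lam : Fin l) × Fin (mlam lam)) ≃ Fin m)
    (K : Fin m → ℝ) (hK : ∀ μ, 0 < K μ)
    (hind : LinearIndependent ℝ (chi φ K))
    (hker : LinearMap.ker A.mulVecLin = Submodule.span ℝ (Set.range (chi φ K))) :
    LinearIndependent ℝ
      (fun s : (lam : Fin l) × Fin (mlam lam - 1) =>
        K (src φ s) • (Pi.single (tgt φ s) 1 : Fin m → ℝ) -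
          K (tgt φ s) • (Pi.single (src φ s) 1 : Fin m → ℝ)) ∧
    Submodule.span ℝ
      (Set.range (fun s : (lam : Fin l) × Fin (mlam lam - 1) =>
        K (src φ s) • (Pi.single (tgt φ s) 1 : Fin m → ℝ) -
          K (tgt φ s) • (Pi.single (src φ s) 1 : Fin m → ℝ))) =
      orthComp (LinearMap.ker A.mulVecLin) ∧
    ∀ ψ : Fin m → ℝ, A.mulVec ψ = 0 ↔
      ∀ s : (lam : Fin l) × Fin (mlam lam - 1),
        K (src φ s) * ψ (tgt φ s) - K (tgt φ s) * ψ (src φ s) = 0 := by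
  set V : ((lam : Fin l) × Fin (mlam lam - 1)) → (Fin m → ℝ) :=
    fun s => K (src φ s) • (Pi.single (tgt φ s) 1 : Fin m → ℝ) -
      K (tgt φ s) • (Pi.single (src φ s) 1 : Fin m → ℝ) with hVdef
  -- values of chi at src/tgt
  have hchitgt : ∀ (lam : Fin l) s, chi φ K lam (tgt φ s) =
      if s.1 = lam then K (tgt φ s) else 0 := by
    intro lam s
    simp [chi, tgt, Equiv.symm_apply_apply]
  have hchisrc : ∀ (lam : Fin l) s, chi φ K lam (src φ s) =
      if s.1 = lam then K (src φ s) else 0 := by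
    intro lam s
    simp [chi, src, Equiv.symm_apply_apply]
  -- the key equivalence: T ψ = 0 ↔ ψ ∈ span chi
  have hTiff : ∀ ψ : Fin m → ℝ,
      (∀ s, K (src φ s) * ψ (tgt φ s) - K (tgt φ s) * ψ (src φ s) = 0) ↔
      ψ ∈ Submodule.span ℝ (Set.range (chi φ K)) := by
    intro ψ
    constructor
    · intro h
      have key : ∀ (lam : Fin l) (k : ℕ) (hk : k < mlam lam),
          ψ (φ ⟨lam, ⟨k, hk⟩⟩) * K (φ ⟨lam, ⟨0, hml lam⟩⟩) =
          ψ (φ ⟨lam, ⟨0, hml lam⟩⟩) * K (φ ⟨lam, ⟨k, hk⟩⟩) := by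
        intro lam k
        induction k with
        | zero => intro hk; rfl
        | succ k ih =>
          intro hk
          have hk' : k < mlam lam - 1 := by omega
          have h1 := h ⟨lam, ⟨k, hk'⟩⟩
          have ih' := ih (by omega)
          have hKk : K (φ ⟨lam, ⟨k, by omega⟩⟩) ≠ 0 := (hK _).ne'
          apply mul_left_cancel₀ hKk
          simp only [src, tgt] at h1
          linear_combination (K (φ ⟨lam, ⟨0, hml lam⟩⟩)) * h1 +
            (K (φ ⟨lam, ⟨k + 1, hk⟩⟩)) * ih'
      have hψ : ψ = ∑ lam : Fin l,
          (ψ (φ ⟨lam, ⟨0, hml lam⟩⟩) / K (φ ⟨lam, ⟨0, hml lam⟩⟩)) • chi φ K lam := by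
        funext μ
        obtain ⟨⟨lam, k⟩, rfl⟩ : ∃ x, φ x = μ := ⟨φ.symm μ, by simp⟩
        have hval : ∀ lam' : Fin l, chi φ K lam' (φ ⟨lam, k⟩) =
            if lam = lam' then K (φ ⟨lam, k⟩) else 0 := by
          intro lam'; simp [chi, Equiv.symm_apply_apply]
        simp only [Finset.sum_apply, Pi.smul_apply, smul_eq_mul, hval, mul_ite, mul_zero,
          Finset.sum_ite_eq, Finset.mem_univ, if_true]
        have := key lam k.1 k.2
        have hK0 : K (φ ⟨lam, ⟨0, hml lam⟩⟩) ≠ 0 := (hK _).ne'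
        field_simp
        linear_combination this
      rw [hψ]
      exact Submodule.sum_mem _ fun lam _ =>
        Submodule.smul_mem _ _ (Submodule.subset_span ⟨lam, rfl⟩)
    · intro hmem s
      induction hmem using Submodule.span_induction with
      | mem u hu =>
        obtain ⟨lam, rfl⟩ := hu
        rw [hchitgt, hchisrc]
        split_ifs <;> ring
      | zero => simp
      | add u w _ _ hu hw =>
        simp only [Pi.add_apply, mul_add] at *
        linarith
      | smul c u _ hu =>
        simp only [Pi.smul_apply, smul_eq_mul]
        linear_combination c * hu
  -- span V = orthComp (span chi)
  have hsum : ∀ (ψ : Fin m → ℝ) s, ∑ i, ψ i * V s i =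
      K (src φ s) * ψ (tgt φ s) - K (tgt φ s) * ψ (src φ s) := by
    intro ψ s
    rw [hVdef, sum_mul_vpair]
  have h1 : orthComp (Submodule.span ℝ (Set.range V)) =
      Submodule.span ℝ (Set.range (chi φ K)) := by
    ext ψ
    rw [mem_orthComp_span_range, ← hTiff ψ]
    exact forall_congr' fun s => by rw [hsum]
  have hspanV : Submodule.span ℝ (Set.range V) =
      orthComp (Submodule.span ℝ (Set.range (chi φ K))) := by
    conv_lhs => rw [← orthComp_orthComp (Submodule.span ℝ (Set.range V)), h1]
  -- cardinalities
  have hm : ∑ lam, mlam lam = m := by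
    have := Fintype.card_congr φ
    simpa [Fintype.card_sigma] using this
  have hcard : Fintype.card ((lam : Fin l) × Fin (mlam lam - 1)) = m - l := by
    rw [Fintype.card_sigma]
    simp only [Fintype.card_fin]
    have e1 : ∑ lam, ((mlam lam - 1) + 1) = ∑ lam, mlam lam :=
      Finset.sum_congr rfl fun lam _ => by have := hml lam; omega
    rw [Finset.sum_add_distrib] at e1
    simp only [Finset.sum_const, Finset.card_univ, Fintype.card_fin,
      smul_eq_mul, mul_one] at e1
    omega
  have hlm : l ≤ m := by
    have : ∑ lam, 1 ≤ ∑ lam, mlam lam := Finset.sum_le_sum fun lam _ => hml lam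
    simpa [hm] using this
  have hrank : Module.finrank ℝ
      (orthComp (Submodule.span ℝ (Set.range (chi φ K)))) = m - l := by
    have h2 := finrank_orthComp (Submodule.span ℝ (Set.range (chi φ K)))
    have h3 : Module.finrank ℝ (Submodule.span ℝ (Set.range (chi φ K))) = l := by
      rw [finrank_span_eq_card hind, Fintype.card_fin]
    omega
  refine ⟨?_, ?_, ?_⟩
  · rw [linearIndependent_iff_card_eq_finrank_span, hcard]
    unfold Set.finrank
    rw [hspanV, hrank]
  · rw [hker, ← hspanV]
  · intro ψ
    have hker' : A.mulVec ψ = 0 ↔ ψ ∈ LinearMap.ker A.mulVecLin := by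
      simp [LinearMap.mem_ker, Matrix.mulVecLin_apply]
    rw [hker', hker, ← hTiff ψ]
end

section
/- Let A ∈ ℝ^{m×m} and suppose ker(A) is spanned by l linearly independent vectors χ^1,…,χ^l ∈ ℝ^m with χ^λ_μ = K_μ > 0 for μ ∈ L_λ and χ^λ_μ = 0 for μ ∉ L_λ, where L_1,…,L_l partition {1,…,m} and the elements of L_λ are enumerated as i^λ_1,…,i^λ_{m_λ}. Let ℰ = {(i^λ_μ, i^λ_{μ+1}) : λ = 1,…,l; μ = 1,…,m_λ−1}, and let Ỹ ∈ ℝ^{n×m} with columns ỹ^1,…,ỹ^m. Then {x ∈ ℝ^n_> : A x^{Ỹ} = 0} = {x ∈ ℝ^n_> : K_i x^{ỹ^j} − K_j x^{ỹ^i} = 0 for all (i,j) ∈ ℰ}. -/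
/-- Membership in the span of the `χ^λ` is equivalent to being of the form
`μ ↦ c_{λ(μ)} K_μ`. -/
lemma mem_span_chi_iff {m l : ℕ} {mlam : Fin l → ℕ}
    (φ : ((lam : Fin l) × Fin (mlam lam)) ≃ Fin m) (K : Fin m → ℝ) (v : Fin m → ℝ) :
    v ∈ Submodule.span ℝ (Set.range (chi φ K)) ↔
      ∃ c : Fin l → ℝ, ∀ μ, v μ = c (φ.symm μ).1 * K μ := by
  rw [Submodule.mem_span_range_iff_exists_fun]
  constructor
  · rintro ⟨c, hc⟩
    refine ⟨c, fun μ => ?_⟩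
    rw [← hc]
    simp only [Finset.sum_apply, Pi.smul_apply, chi, smul_eq_mul]
    rw [Finset.sum_eq_single (φ.symm μ).1]
    · simp
    · intro b _ hb; simp [Ne.symm hb]
    · simp
  · rintro ⟨c, hc⟩
    refine ⟨c, ?_⟩
    funext μ
    simp only [Finset.sum_apply, Pi.smul_apply, chi, smul_eq_mul]
    rw [Finset.sum_eq_single (φ.symm μ).1]
    · rw [if_pos rfl, hc]
    · intro b _ hb; simp [Ne.symm hb]
    · simp

/-- under the kernel-structure assumption on `A`, the positive solutions of
`A x^Ỹ = 0` are exactly the positive solutions of the binomial equations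
`K_i x^{ỹ^j} - K_j x^{ỹ^i} = 0`, `(i,j) ∈ ℰ`. -/
theorem stmt9 {m l n : ℕ} {A : Matrix (Fin m) (Fin m) ℝ}
    {mlam : Fin l → ℕ} (hml : ∀ lam, 0 < mlam lam)
    (φ : ((lam : Fin l) × Fin (mlam lam)) ≃ Fin m)
    (K : Fin m → ℝ) (hK : ∀ μ, 0 < K μ)
    (hind : LinearIndependent ℝ (chi φ K))
    (hker : LinearMap.ker A.mulVecLin = Submodule.span ℝ (Set.range (chi φ K)))
    (Yt : Matrix (Fin n) (Fin m) ℝ) :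
    {x : Fin n → ℝ | (∀ i, 0 < x i) ∧ A.mulVec (matPow x Yt) = 0} =
      {x : Fin n → ℝ | (∀ i, 0 < x i) ∧
        ∀ s : (lam : Fin l) × Fin (mlam lam - 1),
          K (src φ s) * matPow x Yt (tgt φ s) -
            K (tgt φ s) * matPow x Yt (src φ s) = 0} := by
  have hKne : ∀ μ, K μ ≠ 0 := fun μ => (hK μ).ne'
  ext x
  simp only [Set.mem_setOf_eq]
  constructor
  · rintro ⟨hx, hA⟩
    refine ⟨hx, fun s => ?_⟩
    have hv : matPow x Yt ∈ LinearMap.ker A.mulVecLin := hA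
    rw [hker, mem_span_chi_iff] at hv
    obtain ⟨c, hc⟩ := hv
    have h1 := hc (src φ s)
    have h2 := hc (tgt φ s)
    have e1 : (φ.symm (src φ s)).1 = s.1 := by simp [src]
    have e2 : (φ.symm (tgt φ s)).1 = s.1 := by simp [tgt]
    rw [e1] at h1; rw [e2] at h2
    rw [h1, h2]; ring
  · rintro ⟨hx, hE⟩
    refine ⟨hx, ?_⟩
    set v := matPow x Yt with hvdef
    set c : Fin l → ℝ :=
      fun lam => v (φ ⟨lam, ⟨0, hml lam⟩⟩) / K (φ ⟨lam, ⟨0, hml lam⟩⟩) with hcdef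
    have key : ∀ lam (k : ℕ) (hk : k < mlam lam),
        v (φ ⟨lam, ⟨k, hk⟩⟩) = c lam * K (φ ⟨lam, ⟨k, hk⟩⟩) := by
      intro lam k
      induction k with
      | zero =>
        intro hk
        exact (div_mul_cancel₀ _ (hKne (φ ⟨lam, ⟨0, hk⟩⟩))).symm
      | succ k ih =>
        intro hk
        have hk' : k < mlam lam := by omega
        have hk'' : k < mlam lam - 1 := by omega
        have hs := hE ⟨lam, ⟨k, hk''⟩⟩
        have hs2 : K (φ ⟨lam, ⟨k, hk'⟩⟩) * v (φ ⟨lam, ⟨k + 1, hk⟩⟩)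
            = K (φ ⟨lam, ⟨k + 1, hk⟩⟩) * v (φ ⟨lam, ⟨k, hk'⟩⟩) := sub_eq_zero.mp hs
        have hK0 := hKne (φ ⟨lam, ⟨k, hk'⟩⟩)
        have hmul : K (φ ⟨lam, ⟨k, hk'⟩⟩) * v (φ ⟨lam, ⟨k + 1, hk⟩⟩)
            = K (φ ⟨lam, ⟨k, hk'⟩⟩) * (c lam * K (φ ⟨lam, ⟨k + 1, hk⟩⟩)) := by
          rw [hs2, ih hk']; ring
        exact mul_left_cancel₀ hK0 hmul
    have key2 : ∀ p : (lam : Fin l) × Fin (mlam lam), v (φ p) = c p.1 * K (φ p) :=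
      fun p => key p.1 p.2.1 p.2.2
    have hmem : v ∈ Submodule.span ℝ (Set.range (chi φ K)) := by
      rw [mem_span_chi_iff]
      refine ⟨c, fun μ => ?_⟩
      have h := key2 (φ.symm μ)
      rwa [Equiv.apply_symm_apply] at h
    rw [← hker] at hmem
    exact hmem
end

section
/- Let A ∈ ℝ^{m×m} and suppose ker(A) is spanned by l linearly independent vectors χ^1,…,χ^l ∈ ℝ^m with χ^λ_μ = K_μ > 0 for μ ∈ L_λ and χ^λ_μ = 0 for μ ∉ L_λ, where L_1,…,L_l partition {1,…,m} with enumerations i^λ_1,…,i^λ_{m_λ}, and let ℰ = {(i^λ_μ, i^λ_{μ+1})} be the set of m−l consecutive pairs. Let Ỹ ∈ ℝ^{n×m}, let I_ℰ ∈ ℝ^{m×(m−l)} have column e^j − e^i for (i,j) ∈ ℰ, and set M = Ỹ I_ℰ. If ker(M) = {0}, then the set Z = {x ∈ ℝ^n_> : A x^{Ỹ} = 0} is nonempty. -/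
/-- The matrix `I_ℰ` whose column for `(i,j) ∈ ℰ` is `e^j - e^i`. -/
def Imat {m l : ℕ} {mlam : Fin l → ℕ} (φ : ((lam : Fin l) × Fin (mlam lam)) ≃ Fin m) :
    Matrix (Fin m) ((lam : Fin l) × Fin (mlam lam - 1)) ℝ :=
  Matrix.of fun i s =>
    (if i = tgt φ s then 1 else 0) - (if i = src φ s then 1 else 0)

open Matrix

/-- under the kernel-structure assumption on `A`, if the exponent matrix
`M = Ỹ I_ℰ` has trivial kernel (kinetic deficiency zero), then `A x^Ỹ = 0` has a
positive solution. -/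
theorem stmt10 {m l n : ℕ} {A : Matrix (Fin m) (Fin m) ℝ}
    {mlam : Fin l → ℕ} (hml : ∀ lam, 0 < mlam lam)
    (φ : ((lam : Fin l) × Fin (mlam lam)) ≃ Fin m)
    (K : Fin m → ℝ) (hK : ∀ μ, 0 < K μ)
    (hind : LinearIndependent ℝ (chi φ K))
    (hker : LinearMap.ker A.mulVecLin = Submodule.span ℝ (Set.range (chi φ K)))
    (Yt : Matrix (Fin n) (Fin m) ℝ)
    (hM : LinearMap.ker (Yt * Imat φ).mulVecLin = ⊥) :
    ∃ x : Fin n → ℝ, (∀ i, 0 < x i) ∧ A.mulVec (matPow x Yt) = 0 := by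
  classical
  set M := Yt * Imat φ with hMdef
  have hinj : Function.Injective M.mulVecLin := by
    rw [← LinearMap.ker_eq_bot]; exact hM
  have hrank : M.rank = Fintype.card ((lam : Fin l) × Fin (mlam lam - 1)) := by
    rw [Matrix.rank, LinearMap.finrank_range_of_inj hinj,
      Module.finrank_fintype_fun_eq_card]
  have hsurj : Function.Surjective Mᵀ.mulVecLin := by
    rw [← LinearMap.range_eq_top]
    apply Submodule.eq_top_of_finrank_eq
    rw [show Module.finrank ℝ ↥(LinearMap.range Mᵀ.mulVecLin) = Mᵀ.rank from rfl,
      Matrix.rank_transpose, hrank, Module.finrank_fintype_fun_eq_card]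
  obtain ⟨y, hy⟩ := hsurj (fun s => Real.log (K (tgt φ s)) - Real.log (K (src φ s)))
  set g : Fin m → ℝ := fun μ => Ytᵀ.mulVec y μ - Real.log (K μ) with hg
  have hedge : ∀ s, g (tgt φ s) = g (src φ s) := by
    intro s
    have h1 : Mᵀ.mulVec y s = Real.log (K (tgt φ s)) - Real.log (K (src φ s)) := by
      have := congrFun hy s
      simpa [Matrix.mulVecLin_apply, Matrix.mulVec_transpose] using this
    have hne : tgt φ s ≠ src φ s := by
      intro h
      have := φ.injective h
      simp [Sigma.ext_iff, Fin.ext_iff] at this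
    have h2 : Mᵀ.mulVec y s = Ytᵀ.mulVec y (tgt φ s) - Ytᵀ.mulVec y (src φ s) := by
      rw [hMdef, Matrix.transpose_mul, ← Matrix.mulVec_mulVec]
      simp [Matrix.mulVec, dotProduct, Matrix.transpose_apply, Imat, sub_mul, ite_mul,
        Finset.sum_sub_distrib, Finset.sum_ite_eq']
    have := h1.symm.trans h2
    simp only [hg]
    linarith
  have hchain : ∀ lam (k : Fin (mlam lam)),
      g (φ ⟨lam, k⟩) = g (φ ⟨lam, ⟨0, hml lam⟩⟩) := by
    intro lam k
    obtain ⟨kv, hk⟩ := k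
    induction kv with
    | zero => rfl
    | succ j ih =>
      have hj' : j < mlam lam - 1 := by omega
      have h := hedge ⟨lam, ⟨j, hj'⟩⟩
      exact h.trans (ih (by omega))
  refine ⟨fun i => Real.exp (y i), fun i => Real.exp_pos _, ?_⟩
  have hpow : ∀ μ, matPow (fun i => Real.exp (y i)) Yt μ
      = Real.exp (g (φ ⟨(φ.symm μ).1, ⟨0, hml _⟩⟩)) * K μ := by
    intro μ
    have h1 : matPow (fun i => Real.exp (y i)) Yt μ = Real.exp (Ytᵀ.mulVec y μ) := by
      simp only [matPow]
      rw [show Ytᵀ.mulVec y μ = ∑ i, y i * Yt i μ by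
        simp [Matrix.mulVec, dotProduct, Matrix.transpose_apply, mul_comm],
        Real.exp_sum]
      exact Finset.prod_congr rfl fun i _ => (Real.exp_mul (y i) (Yt i μ)).symm
    have h2 : Ytᵀ.mulVec y μ = g μ + Real.log (K μ) := by simp [hg]
    have h3 : g μ = g (φ ⟨(φ.symm μ).1, ⟨0, hml _⟩⟩) := by
      have := hchain (φ.symm μ).1 (φ.symm μ).2
      simpa using this
    rw [h1, h2, h3, Real.exp_add, Real.exp_log (hK μ)]
  have hsum : matPow (fun i => Real.exp (y i)) Yt
      = ∑ lam, Real.exp (g (φ ⟨lam, ⟨0, hml lam⟩⟩)) • chi φ K lam := by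
    funext μ
    rw [hpow μ]
    simp only [Finset.sum_apply, Pi.smul_apply, chi, smul_eq_mul, mul_ite, mul_zero]
    rw [Finset.sum_ite_eq (Finset.univ) ((φ.symm μ).1)]
    simp
  have hmem : matPow (fun i => Real.exp (y i)) Yt ∈ LinearMap.ker A.mulVecLin := by
    rw [hker, hsum]
    exact Submodule.sum_mem _ fun lam _ =>
      Submodule.smul_mem _ _ (Submodule.subset_span ⟨lam, rfl⟩)
  simpa [Matrix.mulVecLin_apply] using hmem
end

section
/- Let A ∈ ℝ^{m×m} and suppose ker(A) is spanned by l linearly independent vectors χ^1,…,χ^l ∈ ℝ^m with χ^λ_μ = K_μ > 0 for μ ∈ L_λ and χ^λ_μ = 0 for μ ∉ L_λ, where L_1,…,L_l partition {1,…,m} with enumerations i^λ_1,…,i^λ_{m_λ}, and let ℰ be the set of m−l consecutive pairs (i^λ_μ, i^λ_{μ+1}). Let Ỹ ∈ ℝ^{n×m}, let I_ℰ ∈ ℝ^{m×(m−l)} have column e^j − e^i for (i,j) ∈ ℰ, and set M = Ỹ I_ℰ with s̃ = dim im(M). Suppose x* ∈ Z = {x ∈ ℝ^n_> : A x^{Ỹ}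 = 0} and s̃ < n, and let B ∈ ℝ^{n×(n−s̃)} satisfy im(B) = im(M)^⊥ and ker(B) = {0}. Then Z = { x* ∘ ξ^{B^T} : ξ ∈ ℝ^{n−s̃}_> }. -/
lemma matPow_pos {ι κ : Type*} [Fintype ι] {x : ι → ℝ} (hx : ∀ i, 0 < x i)
    (M : Matrix ι κ ℝ) (j : κ) : 0 < matPow x M j :=
  Finset.prod_pos fun i _ => Real.rpow_pos_of_pos (hx i) _

lemma log_matPow {ι κ : Type*} [Fintype ι] {x : ι → ℝ} (hx : ∀ i, 0 < x i)
    (M : Matrix ι κ ℝ) (j : κ) :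
    Real.log (matPow x M j) = ∑ i, M i j * Real.log (x i) := by
  rw [matPow, Real.log_prod]
  · exact Finset.sum_congr rfl fun i _ => Real.log_rpow (hx i) _
  · exact fun i _ => ne_of_gt (Real.rpow_pos_of_pos (hx i) _)

lemma pair_of_mem_span {m l : ℕ} {mlam : Fin l → ℕ}
    (φ : ((lam : Fin l) × Fin (mlam lam)) ≃ Fin m) (K : Fin m → ℝ)
    {v : Fin m → ℝ} (hv : v ∈ Submodule.span ℝ (Set.range (chi φ K)))
    (s : (lam : Fin l) × Fin (mlam lam - 1)) :
    v (tgt φ s) * K (src φ s) = v (src φ s) * K (tgt φ s) := by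
  induction hv using Submodule.span_induction with
  | mem x hx =>
      obtain ⟨lam, rfl⟩ := hx
      simp only [chi, src, tgt, Equiv.symm_apply_apply]
      by_cases h : s.1 = lam <;> simp [h] <;> ring
  | zero => simp
  | add x y _ _ hx hy => simp only [Pi.add_apply, add_mul, hx, hy]
  | smul c x _ hx =>
      simp only [Pi.smul_apply, smul_eq_mul, mul_assoc, hx]

lemma mem_span_of_pair {m l : ℕ} {mlam : Fin l → ℕ} (hml : ∀ lam, 0 < mlam lam)
    (φ : ((lam : Fin l) × Fin (mlam lam)) ≃ Fin m) {K : Fin m → ℝ} (hK : ∀ μ, 0 < K μ)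
    {v : Fin m → ℝ}
    (hv : ∀ s, v (tgt φ s) * K (src φ s) = v (src φ s) * K (tgt φ s)) :
    v ∈ Submodule.span ℝ (Set.range (chi φ K)) := by
  set c : Fin l → ℝ :=
    fun lam => v (φ ⟨lam, ⟨0, hml lam⟩⟩) / K (φ ⟨lam, ⟨0, hml lam⟩⟩) with hc
  have key : ∀ (lam : Fin l) (k : ℕ) (hk : k < mlam lam),
      v (φ ⟨lam, ⟨k, hk⟩⟩) = c lam * K (φ ⟨lam, ⟨k, hk⟩⟩) := by
    intro lam k
    induction k with
    | zero =>
        intro hk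
        have h0 : (⟨0, hk⟩ : Fin (mlam lam)) = ⟨0, hml lam⟩ := rfl
        rw [hc, h0, div_mul_cancel₀ _ (ne_of_gt (hK _))]
    | succ k ih =>
        intro hk
        have hk' : k < mlam lam := by omega
        have hk1 : k < mlam lam - 1 := by omega
        have hs := hv ⟨lam, ⟨k, hk1⟩⟩
        have hsrc : src φ ⟨lam, ⟨k, hk1⟩⟩ = φ ⟨lam, ⟨k, hk'⟩⟩ := rfl
        have htgt : tgt φ ⟨lam, ⟨k, hk1⟩⟩ = φ ⟨lam, ⟨k + 1, hk⟩⟩ := rfl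
        rw [hsrc, htgt, ih hk'] at hs
        have hKne : K (φ ⟨lam, ⟨k, hk'⟩⟩) ≠ 0 := ne_of_gt (hK _)
        have h2 : v (φ ⟨lam, ⟨k + 1, hk⟩⟩) * K (φ ⟨lam, ⟨k, hk'⟩⟩)
            = (c lam * K (φ ⟨lam, ⟨k + 1, hk⟩⟩)) * K (φ ⟨lam, ⟨k, hk'⟩⟩) := by
          rw [hs]; ring
        exact mul_right_cancel₀ hKne h2
  have hrepr : v = ∑ lam, c lam • chi φ K lam := by
    funext μ
    rw [Finset.sum_apply]
    have h1 : ∀ lam ∈ Finset.univ,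
        (c lam • chi φ K lam) μ = if (φ.symm μ).1 = lam then c lam * K μ else 0 := by
      intro lam _
      simp only [Pi.smul_apply, chi, smul_eq_mul, mul_ite, mul_zero]
    rw [Finset.sum_congr rfl h1, Finset.sum_ite_eq Finset.univ ((φ.symm μ).1)
      (fun lam => c lam * K μ)]
    simp only [Finset.mem_univ, if_true]
    have h2 := key (φ.symm μ).1 (φ.symm μ).2.1 (φ.symm μ).2.2
    have h3 : φ ⟨(φ.symm μ).1, ⟨(φ.symm μ).2.1, (φ.symm μ).2.2⟩⟩ = μ := by
      simpa using φ.apply_symm_apply μ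
    rw [h3] at h2
    exact h2
  rw [hrepr]
  exact Submodule.sum_mem _ fun lam _ =>
    Submodule.smul_mem _ _ (Submodule.subset_span ⟨lam, rfl⟩)

lemma Mm_apply {m l n : ℕ} {mlam : Fin l → ℕ}
    (φ : ((lam : Fin l) × Fin (mlam lam)) ≃ Fin m) (Yt : Matrix (Fin n) (Fin m) ℝ)
    (i : Fin n) (s : (lam : Fin l) × Fin (mlam lam - 1)) :
    (Yt * Imat φ) i s = Yt i (tgt φ s) - Yt i (src φ s) := by
  simp only [Matrix.mul_apply, Imat, Matrix.of_apply, mul_sub, mul_ite, mul_one, mul_zero,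
    Finset.sum_sub_distrib, Finset.sum_ite_eq' Finset.univ, Finset.mem_univ, if_true]

/-- under the kernel-structure assumption on `A`, with `M = Ỹ I_ℰ`,
`s̃ = dim im M < n`, a positive solution `x*` of `A x^Ỹ = 0`, and `B` whose columns
form a basis of `im(M)^⊥`: the positive solution set equals `{ x* ∘ ξ^{Bᵀ} }`. -/
theorem stmt13 {m l n st : ℕ} {A : Matrix (Fin m) (Fin m) ℝ}
    {mlam : Fin l → ℕ} (hml : ∀ lam, 0 < mlam lam)
    (φ : ((lam : Fin l) × Fin (mlam lam)) ≃ Fin m)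
    (K : Fin m → ℝ) (hK : ∀ μ, 0 < K μ)
    (hind : LinearIndependent ℝ (chi φ K))
    (hker : LinearMap.ker A.mulVecLin = Submodule.span ℝ (Set.range (chi φ K)))
    (Yt : Matrix (Fin n) (Fin m) ℝ)
    (hst : Module.finrank ℝ (LinearMap.range (Yt * Imat φ).mulVecLin) = st)
    (hstn : st < n)
    (xs : Fin n → ℝ) (hxs : ∀ i, 0 < xs i) (hsol : A.mulVec (matPow xs Yt) = 0)
    (B : Matrix (Fin n) (Fin (n - st)) ℝ)
    (hB1 : LinearMap.range B.mulVecLin = orthComp (LinearMap.range (Yt * Imat φ).mulVecLin))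
    (hB2 : LinearMap.ker B.mulVecLin = ⊥) :
    {x : Fin n → ℝ | (∀ i, 0 < x i) ∧ A.mulVec (matPow x Yt) = 0} =
      {x : Fin n → ℝ | ∃ ξ : Fin (n - st) → ℝ, (∀ j, 0 < ξ j) ∧
        x = fun i => xs i * matPow ξ B.transpose i} := by
  have hvs : matPow xs Yt ∈ Submodule.span ℝ (Set.range (chi φ K)) := by
    rw [← hker, LinearMap.mem_ker, Matrix.mulVecLin_apply]; exact hsol
  ext x
  simp only [Set.mem_setOf_eq]
  constructor
  · rintro ⟨hxpos, hxsol⟩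
    have hv : matPow x Yt ∈ Submodule.span ℝ (Set.range (chi φ K)) := by
      rw [← hker, LinearMap.mem_ker, Matrix.mulVecLin_apply]; exact hxsol
    set w : Fin n → ℝ := fun i => Real.log (x i) - Real.log (xs i) with hw
    have hcol : ∀ s, ∑ i, w i * (Yt * Imat φ) i s = 0 := by
      intro s
      have p1 := pair_of_mem_span φ K hv s
      have p2 := pair_of_mem_span φ K hvs s
      have l1 : Real.log (matPow x Yt (tgt φ s)) + Real.log (K (src φ s))
          = Real.log (matPow x Yt (src φ s)) + Real.log (K (tgt φ s)) := by
        rw [← Real.log_mul (ne_of_gt (matPow_pos hxpos _ _)) (ne_of_gt (hK _)),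
            ← Real.log_mul (ne_of_gt (matPow_pos hxpos _ _)) (ne_of_gt (hK _)), p1]
      have l2 : Real.log (matPow xs Yt (tgt φ s)) + Real.log (K (src φ s))
          = Real.log (matPow xs Yt (src φ s)) + Real.log (K (tgt φ s)) := by
        rw [← Real.log_mul (ne_of_gt (matPow_pos hxs _ _)) (ne_of_gt (hK _)),
            ← Real.log_mul (ne_of_gt (matPow_pos hxs _ _)) (ne_of_gt (hK _)), p2]
      rw [log_matPow hxpos, log_matPow hxpos] at l1
      rw [log_matPow hxs, log_matPow hxs] at l2
      have e1 : ∑ i, w i * (Yt * Imat φ) i s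
          = (∑ i, Yt i (tgt φ s) * Real.log (x i)) - (∑ i, Yt i (src φ s) * Real.log (x i))
            - ((∑ i, Yt i (tgt φ s) * Real.log (xs i))
              - (∑ i, Yt i (src φ s) * Real.log (xs i))) := by
        rw [← Finset.sum_sub_distrib, ← Finset.sum_sub_distrib, ← Finset.sum_sub_distrib]
        refine Finset.sum_congr rfl fun i _ => ?_
        rw [Mm_apply φ Yt i s, hw]; ring
      rw [e1]; linarith
    have hworth : w ∈ orthComp (LinearMap.range (Yt * Imat φ).mulVecLin) := by
      intro u hu
      obtain ⟨cvec, rfl⟩ := hu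
      simp only [Matrix.mulVecLin_apply]
      have expand : ∀ i, (Yt * Imat φ).mulVec cvec i = ∑ s, (Yt * Imat φ) i s * cvec s := by
        intro i; rfl
      calc ∑ i, w i * (Yt * Imat φ).mulVec cvec i
          = ∑ s, (∑ i, w i * (Yt * Imat φ) i s) * cvec s := by
            simp only [expand, Finset.mul_sum, Finset.sum_mul]
            rw [Finset.sum_comm]
            refine Finset.sum_congr rfl fun i _ => Finset.sum_congr rfl fun s _ => by ring
        _ = 0 := by simp [hcol]
    rw [← hB1] at hworth
    obtain ⟨η, hη⟩ := hworth
    refine ⟨fun j => Real.exp (η j), fun j => Real.exp_pos _, ?_⟩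
    funext i
    have hmp : matPow (fun j => Real.exp (η j)) B.transpose i = Real.exp (w i) := by
      calc matPow (fun j => Real.exp (η j)) B.transpose i
          = ∏ j, Real.exp (η j * B.transpose j i) := by
            refine Finset.prod_congr rfl fun j _ => ?_
            rw [Real.rpow_def_of_pos (Real.exp_pos _), Real.log_exp]
        _ = Real.exp (∑ j, η j * B.transpose j i) := (Real.exp_sum _ _).symm
        _ = Real.exp (B.mulVec η i) := by
            congr 1
            simp [Matrix.mulVec, dotProduct, Matrix.transpose_apply, mul_comm]
        _ = Real.exp (w i) := by
            rw [show B.mulVec η = w by simpa [Matrix.mulVecLin_apply] using hη]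
    rw [hmp, hw]
    simp only
    rw [Real.exp_sub, Real.exp_log (hxpos i), Real.exp_log (hxs i), mul_comm,
      div_mul_cancel₀ _ (ne_of_gt (hxs i))]
  · rintro ⟨ξ, hξ, rfl⟩
    set t : Fin n → ℝ := fun i => matPow ξ B.transpose i with ht
    have htpos : ∀ i, 0 < t i := fun i => matPow_pos hξ _ _
    refine ⟨fun i => mul_pos (hxs i) (htpos i), ?_⟩
    have hsplit : ∀ μ, matPow (fun i => xs i * t i) Yt μ = matPow xs Yt μ * matPow t Yt μ := by
      intro μ
      unfold matPow
      rw [← Finset.prod_mul_distrib]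
      exact Finset.prod_congr rfl fun i _ =>
        Real.mul_rpow (le_of_lt (hxs i)) (le_of_lt (htpos i))
    have hlt : ∀ i, Real.log (t i) = B.mulVec (fun j => Real.log (ξ j)) i := by
      intro i
      rw [ht]
      simp only
      rw [log_matPow hξ]
      simp [Matrix.mulVec, dotProduct, Matrix.transpose_apply, mul_comm]
    have hBmem : B.mulVec (fun j => Real.log (ξ j))
        ∈ orthComp (LinearMap.range (Yt * Imat φ).mulVecLin) := by
      rw [← hB1]; exact ⟨_, rfl⟩
    have hteq : ∀ s, matPow t Yt (tgt φ s) = matPow t Yt (src φ s) := by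
      intro s
      have hu : (Yt * Imat φ).mulVec (Pi.single s 1)
          ∈ LinearMap.range (Yt * Imat φ).mulVecLin := ⟨_, rfl⟩
      have h0 := hBmem _ hu
      have hsingle : ∀ i, (Yt * Imat φ).mulVec (Pi.single s 1) i = (Yt * Imat φ) i s := by
        intro i
        simp [Matrix.mulVec, dotProduct, Pi.single_apply, mul_ite]
      rw [Finset.sum_congr rfl (fun i _ => by rw [hsingle i])] at h0
      have hlog : Real.log (matPow t Yt (tgt φ s)) = Real.log (matPow t Yt (src φ s)) := by
        rw [log_matPow htpos, log_matPow htpos]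
        have e2 : ∑ i, B.mulVec (fun j => Real.log (ξ j)) i * (Yt * Imat φ) i s
            = (∑ i, Yt i (tgt φ s) * Real.log (t i))
              - (∑ i, Yt i (src φ s) * Real.log (t i)) := by
          rw [← Finset.sum_sub_distrib]
          refine Finset.sum_congr rfl fun i _ => ?_
          rw [Mm_apply φ Yt i s, ← hlt i]; ring
        rw [e2] at h0
        linarith
      have := congrArg Real.exp hlog
      rwa [Real.exp_log (matPow_pos htpos _ _), Real.exp_log (matPow_pos htpos _ _)] at this
    have hmem : matPow (fun i => xs i * t i) Yt ∈ Submodule.span ℝ (Set.range (chi φ K)) := by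
      refine mem_span_of_pair hml φ hK fun s => ?_
      rw [hsplit, hsplit, hteq s]
      have pvs := pair_of_mem_span φ K hvs s
      linear_combination matPow t Yt (src φ s) * pvs
    rw [← hker, LinearMap.mem_ker, Matrix.mulVecLin_apply] at hmem
    exact hmem
end

section
/- Let G = (V,E) be a finite digraph without self-loops, V = {1,…,m}, with l connected components of the underlying undirected graph, with enumerations i^λ_1,…,i^λ_{m_λ} of the components and ℰ the set of m−l consecutive pairs (i^λ_μ, i^λ_{μ+1}). Suppose there exist positive edge weights k_0 and a vector K_0 ∈ ℝ^m_> with A_{k_0} K_0 = 0 (i.e. G is weakly reversible). Then for every γ ∈ ℝ^{m−l}_> there exist positive edge weights k and a vector K ∈ ℝ^m_> such that A_k K = 0 and K_j / K_i = γ_{(i,j)} for all (i,j) ∈ ℰ. -/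
/-- The weighted graph Laplacian `A_k` of a digraph on `{1,…,m}` with edge set `E`
and weights `k`: `(A_k)_{ij} = k_{(j,i)}` if `(j,i) ∈ E`, `i ≠ j`;
`(A_k)_{ii} = -∑_{j : (i,j) ∈ E} k_{(i,j)}`; and `0` otherwise. -/
def lap {m : ℕ} (E : Finset (Fin m × Fin m)) (k : Fin m × Fin m → ℝ) :
    Matrix (Fin m) (Fin m) ℝ :=
  Matrix.of fun i j =>
    if i = j then -∑ jt : Fin m, (if (i, jt) ∈ E then k (i, jt) else 0)
    else if (j, i) ∈ E then k (j, i) else 0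

/-- for a weakly reversible digraph (witnessed by weights `k₀` and a
positive vector `K₀` with `A_{k₀} K₀ = 0`) whose underlying undirected graph has
connected components given by the enumeration `φ`, every positive vector
`γ ∈ ℝ^{m-l}_>` of prescribed ratios along the consecutive pairs `ℰ` is attained:
there are weights `k` and `K ∈ ℝ^m_>` with `A_k K = 0` and `K_j / K_i = γ_{(i,j)}`
for all `(i,j) ∈ ℰ`. -/
theorem stmt14 {m l : ℕ} (E : Finset (Fin m × Fin m)) (hE : ∀ e ∈ E, e.1 ≠ e.2)
    {mlam : Fin l → ℕ} (hml : ∀ lam, 0 < mlam lam)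
    (φ : ((lam : Fin l) × Fin (mlam lam)) ≃ Fin m)
    (G0 : SimpleGraph (Fin m))
    (hG0 : ∀ i j, G0.Adj i j ↔ i ≠ j ∧ ((i, j) ∈ E ∨ (j, i) ∈ E))
    (hcomp : ∀ s t : (lam : Fin l) × Fin (mlam lam),
      G0.Reachable (φ s) (φ t) ↔ s.1 = t.1)
    (k0 : Fin m × Fin m → ℝ) (hk0 : ∀ e ∈ E, 0 < k0 e)
    (K0 : Fin m → ℝ) (hK0 : ∀ μ, 0 < K0 μ) (h0 : (lap E k0).mulVec K0 = 0)
    (γ : ((lam : Fin l) × Fin (mlam lam - 1)) → ℝ) (hγ : ∀ s, 0 < γ s) :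
    ∃ (k : Fin m × Fin m → ℝ) (K : Fin m → ℝ),
      (∀ e ∈ E, 0 < k e) ∧ (∀ μ, 0 < K μ) ∧ (lap E k).mulVec K = 0 ∧
      ∀ s, K (tgt φ s) / K (src φ s) = γ s := by
  classical
  -- auxiliary weight function avoiding dependent proofs
  set g : Fin l → ℕ → ℝ := fun lam n =>
    if h : n < mlam lam - 1 then γ ⟨lam, ⟨n, h⟩⟩ else 1 with hg
  have hgpos : ∀ lam n, 0 < g lam n := by
    intro lam n
    simp only [hg]
    split
    · exact hγ _
    · norm_num
  set K : Fin m → ℝ := fun i =>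
    ∏ ν ∈ Finset.range (φ.symm i).2.val, g (φ.symm i).1 ν with hKdef
  have hKpos : ∀ i, 0 < K i := by
    intro i
    exact Finset.prod_pos fun ν _ => hgpos _ _
  set k : Fin m × Fin m → ℝ := fun e => k0 e * K0 e.1 / K e.1 with hkdef
  have hkpos : ∀ e ∈ E, 0 < k e := by
    intro e he
    exact div_pos (mul_pos (hk0 e he) (hK0 e.1)) (hKpos e.1)
  have hkK : ∀ e : Fin m × Fin m, k e * K e.1 = k0 e * K0 e.1 := by
    intro e
    simp only [hkdef]
    rw [div_mul_cancel₀ _ (ne_of_gt (hKpos e.1))]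
  refine ⟨k, K, hkpos, hKpos, ?_, ?_⟩
  · have key : ∀ i j, lap E k i j * K j = lap E k0 i j * K0 j := by
      intro i j
      by_cases hij : i = j
      · subst hij
        simp only [lap, Matrix.of_apply, if_pos rfl, eq_self_iff_true, if_true,
          neg_mul, neg_inj, Finset.sum_mul]
        apply Finset.sum_congr rfl
        intro jt _
        by_cases h : (i, jt) ∈ E
        · simpa [h] using hkK (i, jt)
        · simp [h]
      · simp only [lap, Matrix.of_apply, if_neg hij, if_neg (Ne.symm hij)]
        by_cases h : (j, i) ∈ E
        · simpa [h] using hkK (j, i)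
        · simp [h]
    have : (lap E k).mulVec K = (lap E k0).mulVec K0 := by
      funext i
      simp only [Matrix.mulVec, dotProduct]
      exact Finset.sum_congr rfl fun j _ => key i j
    rw [this, h0]
  · intro s
    have hsrc : φ.symm (src φ s) = ⟨s.1, ⟨s.2.1, by have := s.2.2; omega⟩⟩ :=
      Equiv.symm_apply_apply φ _
    have htgt : φ.symm (tgt φ s) = ⟨s.1, ⟨s.2.1 + 1, by have := s.2.2; omega⟩⟩ :=
      Equiv.symm_apply_apply φ _
    have h1 : K (src φ s) = ∏ ν ∈ Finset.range s.2.1, g s.1 ν := by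
      simp only [hKdef]; rw [hsrc]
    have h2 : K (tgt φ s) = (∏ ν ∈ Finset.range s.2.1, g s.1 ν) * g s.1 s.2.1 := by
      simp only [hKdef]; rw [htgt]; exact Finset.prod_range_succ _ _
    have hne : (∏ ν ∈ Finset.range s.2.1, g s.1 ν) ≠ 0 :=
      ne_of_gt (Finset.prod_pos fun ν _ => hgpos _ _)
    rw [h1, h2, mul_comm, mul_div_assoc, div_self hne, mul_one]
    simp only [hg]
    rw [dif_pos s.2.2]
end

section
/- Let G = (V,E) be a finite digraph without self-loops, V = {1,…,m}, in which every connected component is strongly connected (G is weakly reversible), and let y : V → ℝ^n and ỹ : V → ℝ^n assign stoichiometric and kinetic complexes to the vertices. Let S = span{ y(j) − y(i) : (i,j) ∈ E } and S̃ = span{ ỹ(j) − ỹ(i) : (i,j) ∈ E }, and let Ỹ ∈ ℝ^{n×m} have columns ỹ(1),…,ỹ(m). If σ(S) ∩ σ(S̃^⊥) ≠ {0}, then there exist positive edge weights k and two distinct vectors x_1, x_2 ∈ ℝ^n_> with x_1 − x_2 ∈ S such that A_k x_1^{Ỹ} = 0 and A_k x_2^{Ỹ} = 0 (two complex balancing equilibria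 in the same stoichiometric compatibility class). -/
namespace Stmt16Aux

/-- divergence of an edge weighting at a vertex (inflow minus outflow). -/
def dvg {m : ℕ} (E : Finset (Fin m × Fin m)) (f : Fin m × Fin m → ℝ) (z : Fin m) : ℝ :=
  (∑ j, if (j, z) ∈ E then f (j, z) else 0) - (∑ j, if (z, j) ∈ E then f (z, j) else 0)

lemma dvg_add {m : ℕ} (E : Finset (Fin m × Fin m)) (f g : Fin m × Fin m → ℝ) (z : Fin m) :
    dvg E (f + g) z = dvg E f z + dvg E g z := by
  unfold dvg
  have h1 : ∀ (p : Fin m × Fin m → Prop) [DecidablePred p] (w : Fin m → Fin m × Fin m),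
      (∑ j, if p (w j) then (f + g) (w j) else 0)
        = (∑ j, if p (w j) then f (w j) else 0) + (∑ j, if p (w j) then g (w j) else 0) := by
    intro p _ w
    rw [← Finset.sum_add_distrib]
    refine Finset.sum_congr rfl fun j _ => ?_
    split <;> simp
  rw [h1 (fun e => e ∈ E) (fun j => (j, z)), h1 (fun e => e ∈ E) (fun j => (z, j))]
  ring

lemma dvg_single {m : ℕ} (E : Finset (Fin m × Fin m)) {a b : Fin m} (hab : (a, b) ∈ E)
    (z : Fin m) :
    dvg E (fun e => if e = (a, b) then (1:ℝ) else 0) z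
      = (if z = b then 1 else 0) - (if z = a then 1 else 0) := by
  unfold dvg
  congr 1
  · have key : ∀ j : Fin m, (if (j, z) ∈ E then (if (j, z) = (a, b) then (1:ℝ) else 0) else 0)
        = if j = a ∧ z = b then 1 else 0 := by
      intro j
      by_cases h : j = a ∧ z = b
      · obtain ⟨rfl, rfl⟩ := h
        simp [hab]
      · rw [if_neg h]
        have hne : (j, z) ≠ (a, b) := by
          intro hc
          exact h ⟨congrArg Prod.fst hc, congrArg Prod.snd hc⟩
        simp [hne]
    rw [Finset.sum_congr rfl fun j _ => key j]
    by_cases hz : z = b <;> simp [hz]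
  · have key : ∀ j : Fin m, (if (z, j) ∈ E then (if (z, j) = (a, b) then (1:ℝ) else 0) else 0)
        = if j = b ∧ z = a then 1 else 0 := by
      intro j
      by_cases h : j = b ∧ z = a
      · obtain ⟨rfl, rfl⟩ := h
        simp [hab]
      · rw [if_neg h]
        have hne : (z, j) ≠ (a, b) := by
          intro hc
          exact h ⟨congrArg Prod.snd hc, congrArg Prod.fst hc⟩
        simp [hne]
    rw [Finset.sum_congr rfl fun j _ => key j]
    by_cases hz : z = a <;> simp [hz]

lemma flow_exists {m : ℕ} (E : Finset (Fin m × Fin m)) {a b : Fin m}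
    (h : Relation.ReflTransGen (fun x y => (x, y) ∈ E) a b) :
    ∃ f : Fin m × Fin m → ℝ, (∀ e, 0 ≤ f e) ∧
      ∀ z, dvg E f z = (if z = b then 1 else 0) - (if z = a then 1 else 0) := by
  induction h with
  | refl => exact ⟨0, fun e => le_refl 0, fun z => by simp [dvg]⟩
  | tail hac hcb ih =>
    rename_i c b
    obtain ⟨f, hf0, hfd⟩ := ih
    refine ⟨f + fun e => if e = (c, b) then 1 else 0, fun e => ?_, fun z => ?_⟩
    · have : (0:ℝ) ≤ if e = (c, b) then 1 else 0 := by positivity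
      exact add_nonneg (hf0 e) this
    · rw [dvg_add, hfd z, dvg_single E hcb z]
      ring

lemma balanced_flow_exists {m : ℕ} (E : Finset (Fin m × Fin m))
    (hwr : ∀ i j : Fin m,
      Relation.ReflTransGen (fun a b => (a, b) ∈ E ∨ (b, a) ∈ E) i j →
      Relation.ReflTransGen (fun a b => (a, b) ∈ E) i j) :
    ∃ κ : Fin m × Fin m → ℝ, (∀ e, 0 ≤ κ e) ∧ (∀ e ∈ E, 1 ≤ κ e) ∧ ∀ z, dvg E κ z = 0 := by
  have hone : ∀ e ∈ E, ∃ g : Fin m × Fin m → ℝ, (∀ e', 0 ≤ g e') ∧ (∀ z, dvg E g z = 0) ∧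
      1 ≤ g e := by
    intro e he
    have hpath : Relation.ReflTransGen (fun x y => (x, y) ∈ E) e.2 e.1 :=
      hwr _ _ (Relation.ReflTransGen.single (Or.inr (by simpa using he)))
    obtain ⟨f, hf0, hfd⟩ := flow_exists E hpath
    refine ⟨f + fun e' => if e' = e then 1 else 0, fun e' => ?_, fun z => ?_, ?_⟩
    · have : (0:ℝ) ≤ if e' = e then 1 else 0 := by positivity
      exact add_nonneg (hf0 e') this
    · rw [dvg_add, hfd z, dvg_single E (show (e.1, e.2) ∈ E by simpa using he) z]
      ring
    · simp only [Pi.add_apply, if_true]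
      linarith [hf0 e]
  choose g hg0 hgd hg1 using hone
  set κ : Fin m × Fin m → ℝ := fun e' => ∑ x ∈ E.attach, (fun (y : {z // z ∈ E}) => g y.1 y.2 e') x with hκ
  refine ⟨κ, fun e' => ?_, fun e he => ?_, fun z => ?_⟩
  · exact Finset.sum_nonneg fun x _ => hg0 x.1 x.2 e'
  · calc (1:ℝ) ≤ g e he e := hg1 e he
      _ ≤ ∑ x ∈ E.attach, g x.1 x.2 e :=
        Finset.single_le_sum (f := fun (x : {z // z ∈ E}) => g x.1 x.2 e)
          (fun x _ => hg0 x.1 x.2 e) (Finset.mem_attach _ ⟨e, he⟩)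
  · have hsum : ∀ (p : Fin m × Fin m → Prop) [DecidablePred p] (w : Fin m → Fin m × Fin m),
        (∑ j, if p (w j) then ∑ e ∈ E.attach, g e.1 e.2 (w j) else 0)
          = ∑ e ∈ E.attach, ∑ j, if p (w j) then g e.1 e.2 (w j) else 0 := by
      intro p _ w
      rw [Finset.sum_comm]
      refine Finset.sum_congr rfl fun j _ => ?_
      split <;> simp
    unfold dvg
    rw [hsum (fun e => e ∈ E) (fun j => (j, z)), hsum (fun e => e ∈ E) (fun j => (z, j)),
      ← Finset.sum_sub_distrib]
    refine Finset.sum_eq_zero fun x _ => ?_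
    exact hgd x.1 x.2 z

lemma lap_mulVec {m : ℕ} (E : Finset (Fin m × Fin m)) (hE : ∀ e ∈ E, e.1 ≠ e.2)
    (k : Fin m × Fin m → ℝ) (v : Fin m → ℝ) (i : Fin m) :
    (lap E k).mulVec v i
      = (∑ j, if (j, i) ∈ E then k (j, i) * v j else 0)
        - (∑ j, if (i, j) ∈ E then k (i, j) else 0) * v i := by
  unfold Matrix.mulVec dotProduct lap
  have key : ∀ j : Fin m,
      (Matrix.of fun i j =>
        if i = j then -∑ jt : Fin m, (if (i, jt) ∈ E then k (i, jt) else 0)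
        else if (j, i) ∈ E then k (j, i) else 0) i j * v j
      = (if (j, i) ∈ E then k (j, i) * v j else 0)
        + (if j = i then -(∑ jt, if (i, jt) ∈ E then k (i, jt) else 0) * v i else 0) := by
    intro j
    by_cases hji : j = i
    · subst hji
      have : (j, j) ∉ E := fun h => hE _ h rfl
      simp [Matrix.of_apply, this]
    · have : i ≠ j := fun h => hji h.symm
      simp only [Matrix.of_apply, if_neg this, if_neg hji, add_zero]
      split <;> simp
  rw [Finset.sum_congr rfl fun j _ => key j, Finset.sum_add_distrib]
  simp [Finset.sum_ite_eq']
  ring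

end Stmt16Aux

/-- for a weakly reversible digraph (every vertex reachable in the
underlying undirected graph is reachable by directed paths) with stoichiometric
complexes `y` and kinetic complexes `ỹ`, if `σ(S) ∩ σ(S̃^⊥) ≠ {0}` then there are
rate constants `k` admitting two distinct complex balancing equilibria in the same
stoichiometric compatibility class. -/
theorem stmt16 {m n : ℕ} (E : Finset (Fin m × Fin m)) (hE : ∀ e ∈ E, e.1 ≠ e.2)
    (hwr : ∀ i j : Fin m,
      Relation.ReflTransGen (fun a b => (a, b) ∈ E ∨ (b, a) ∈ E) i j →
      Relation.ReflTransGen (fun a b => (a, b) ∈ E) i j)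
    (y yt : Fin m → Fin n → ℝ)
    (S St : Submodule ℝ (Fin n → ℝ))
    (hS : S = Submodule.span ℝ {v | ∃ e ∈ E, v = y e.2 - y e.1})
    (hSt : St = Submodule.span ℝ {v | ∃ e ∈ E, v = yt e.2 - yt e.1})
    (hsign : ∃ u ∈ S, ∃ w ∈ orthComp St, u ≠ 0 ∧
      (fun i => Real.sign (u i)) = fun i => Real.sign (w i)) :
    ∃ (k : Fin m × Fin m → ℝ) (x1 x2 : Fin n → ℝ),
      (∀ e ∈ E, 0 < k e) ∧ (∀ i, 0 < x1 i) ∧ (∀ i, 0 < x2 i) ∧ x1 ≠ x2 ∧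
      x1 - x2 ∈ S ∧
      (lap E k).mulVec (fun j => ∏ i, x1 i ^ yt j i) = 0 ∧
      (lap E k).mulVec (fun j => ∏ i, x2 i ^ yt j i) = 0 := by
  classical
  obtain ⟨u, huS, w, hw, hune, hsgn⟩ := hsign
  have hwO : ∀ v ∈ St, ∑ i, w i * v i = 0 := hw
  -- sign facts
  have hsg : ∀ i, Real.sign (u i) = Real.sign (w i) := fun i => congrFun hsgn i
  have hupos : ∀ i, 0 < w i → 0 < u i := by
    intro i hw
    rcases lt_trichotomy (u i) 0 with h | h | h
    · have := hsg i
      rw [Real.sign_of_neg h, Real.sign_of_pos hw] at this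
      norm_num at this
    · have := hsg i
      rw [h, Real.sign_zero, Real.sign_of_pos hw] at this
      norm_num at this
    · exact h
  have huneg : ∀ i, w i < 0 → u i < 0 := by
    intro i hw
    rcases lt_trichotomy (u i) 0 with h | h | h
    · exact h
    · have := hsg i
      rw [h, Real.sign_zero, Real.sign_of_neg hw] at this
      norm_num at this
    · have := hsg i
      rw [Real.sign_of_pos h, Real.sign_of_neg hw] at this
      norm_num at this
  have huzero : ∀ i, w i = 0 → u i = 0 := by
    intro i hw
    have := hsg i
    rw [hw, Real.sign_zero] at this
    exact Real.sign_eq_zero_iff.mp this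
  -- the two equilibria
  set x2 : Fin n → ℝ := fun i => if w i = 0 then 1 else u i / (Real.exp (w i) - 1) with hx2
  set x1 : Fin n → ℝ := fun i => x2 i * Real.exp (w i) with hx1
  have hx2pos : ∀ i, 0 < x2 i := by
    intro i
    show (0:ℝ) < if w i = 0 then 1 else u i / (Real.exp (w i) - 1)
    by_cases hw : w i = 0
    · simp [hw]
    · rw [if_neg hw]
      rcases lt_trichotomy (w i) 0 with h | h | h
      · have h1 : Real.exp (w i) - 1 < 0 := by
          have := Real.exp_lt_one_iff.mpr h
          linarith
        exact div_pos_of_neg_of_neg (huneg i h) h1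
      · exact absurd h hw
      · have h1 : 0 < Real.exp (w i) - 1 := by
          have := Real.one_lt_exp_iff.mpr h
          linarith
        exact div_pos (hupos i h) h1
  have hx1pos : ∀ i, 0 < x1 i := fun i => mul_pos (hx2pos i) (Real.exp_pos _)
  have hexpne : ∀ i : Fin n, w i ≠ 0 → Real.exp (w i) - 1 ≠ 0 := by
    intro i hw
    rcases lt_trichotomy (w i) 0 with h | h | h
    · have := Real.exp_lt_one_iff.mpr h
      intro hc; linarith
    · exact absurd h hw
    · have := Real.one_lt_exp_iff.mpr h
      intro hc; linarith
  have hdiff : x1 - x2 = u := by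
    funext i
    show x2 i * Real.exp (w i) - x2 i = u i
    by_cases hw : w i = 0
    · have : x2 i = 1 := by show (if w i = 0 then (1:ℝ) else _) = 1; rw [if_pos hw]
      rw [this, hw, huzero i hw, Real.exp_zero]
      ring
    · have hx2i : x2 i = u i / (Real.exp (w i) - 1) := by
        show (if w i = 0 then (1:ℝ) else u i / (Real.exp (w i) - 1)) = _
        rw [if_neg hw]
      rw [hx2i]
      field_simp [hexpne i hw]
  have hx12ne : x1 ≠ x2 := by
    intro hc
    apply hune
    rw [← hdiff, hc]
    simp
  -- balanced flow and rate constants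
  obtain ⟨κ, hκ0, hκ1, hκd⟩ := Stmt16Aux.balanced_flow_exists E hwr
  set c : Fin m → ℝ := fun j => ∏ i, x2 i ^ yt j i with hc
  have hcpos : ∀ j, 0 < c j := by
    intro j
    exact Finset.prod_pos fun i _ => Real.rpow_pos_of_pos (hx2pos i) _
  set k : Fin m × Fin m → ℝ := fun e => κ e / c e.1 with hk
  have hkpos : ∀ e ∈ E, 0 < k e := by
    intro e he
    exact div_pos (lt_of_lt_of_le one_pos (hκ1 e he)) (hcpos e.1)
  -- key: Laplacian kills c ⊙ d for any edge-constant d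
  have hkey : ∀ d : Fin m → ℝ, (∀ a b, (a, b) ∈ E → d a = d b) →
      (lap E k).mulVec (fun j => c j * d j) = 0 := by
    intro d hdc
    funext i
    rw [Stmt16Aux.lap_mulVec E hE k (fun j => c j * d j) i]
    have h1 : ∀ j : Fin m, (if (j, i) ∈ E then k (j, i) * (c j * d j) else 0)
        = (if (j, i) ∈ E then κ (j, i) else 0) * d i := by
      intro j
      by_cases hji : (j, i) ∈ E
      · rw [if_pos hji, if_pos hji, hdc j i hji]
        show κ (j, i) / c j * (c j * d i) = κ (j, i) * d i
        have hcj := ne_of_gt (hcpos j)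
        field_simp
      · simp [hji]
    have h2 : ∀ j : Fin m, (if (i, j) ∈ E then k (i, j) else 0) * c i
        = (if (i, j) ∈ E then κ (i, j) else 0) := by
      intro j
      by_cases hij : (i, j) ∈ E
      · rw [if_pos hij, if_pos hij]
        show κ (i, j) / c i * c i = κ (i, j)
        exact div_mul_cancel₀ _ (ne_of_gt (hcpos i))
      · simp [hij]
    have h3 : (∑ j, if (i, j) ∈ E then k (i, j) else 0) * (c i * d i)
        = (∑ j, if (i, j) ∈ E then κ (i, j) else 0) * d i := by
      rw [← mul_assoc, Finset.sum_mul, Finset.sum_congr rfl fun j _ => h2 j]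
    rw [Finset.sum_congr rfl fun j _ => h1 j, ← Finset.sum_mul, h3, ← sub_mul]
    have : (∑ j, if (j, i) ∈ E then κ (j, i) else 0)
        - (∑ j, if (i, j) ∈ E then κ (i, j) else 0) = 0 := hκd i
    rw [this, zero_mul]
    rfl
  refine ⟨k, x1, x2, hkpos, hx1pos, hx2pos, hx12ne, hdiff ▸ huS, ?_, ?_⟩
  · -- x1 equilibrium
    have hprod : (fun j => ∏ i, x1 i ^ yt j i)
        = fun j => c j * Real.exp (∑ i, w i * yt j i) := by
      funext j
      show (∏ i, (x2 i * Real.exp (w i)) ^ yt j i) = _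
      rw [hc]
      rw [Real.exp_sum, ← Finset.prod_mul_distrib]
      refine Finset.prod_congr rfl fun i _ => ?_
      rw [Real.mul_rpow (le_of_lt (hx2pos i)) (le_of_lt (Real.exp_pos _)), Real.exp_mul]
    rw [hprod]
    refine hkey _ fun a b hab => ?_
    have hv : yt b - yt a ∈ St := by
      rw [hSt]
      exact Submodule.subset_span ⟨(a, b), hab, rfl⟩
    have h0 := hwO _ hv
    have : ∑ i, w i * yt b i - ∑ i, w i * yt a i = 0 := by
      rw [← Finset.sum_sub_distrib]
      rw [← h0]
      exact Finset.sum_congr rfl fun i _ => by simp [mul_sub]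
    congr 1
    linarith
  · -- x2 equilibrium
    have : (fun j => ∏ i, x2 i ^ yt j i) = fun j => c j * (fun _ : Fin m => (1:ℝ)) j := by
      funext j
      simp [hc]
    rw [this]
    exact hkey _ fun a b _ => rfl
end
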